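/- Let (V,H,G) be a hypergram whose context matrix times anticommutation matrix (product over 𝔽₂) is the zero matrix. Then the rank r of the anticommutation matrix over 𝔽₂ is even, and there exists an (r/2)-qubit Pauli assignment of (V,H,G). -/

import Mathlib

open scoped Classical
open Matrix

noncomputable section

/-- The space of `n`-qubit operators, realized as matrices indexed by
`Fin n → Fin 2` (the `n`-fold tensor-product index). -/
abbrev QMat (n : ℕ) := Matrix (Fin n → Fin 2) (Fin n → Fin 2) ℂ

/-- The four Pauli matrices `I, X, Y, Z`. -/
def pauliMat : Fin 4 → Matrix (Fin 2) (Fin 2) ℂ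
  | ⟨0, _⟩ => 1
  | ⟨1, _⟩ => !![0, 1; 1, 0]
  | ⟨2, _⟩ => !![0, -Complex.I; Complex.I, 0]
  | ⟨3, _⟩ => !![1, 0; 0, -1]

/-- The `n`-fold Kronecker (tensor) product `G₁ ⊗ ⋯ ⊗ Gₙ` of the Pauli matrices
selected by `g : Fin n → Fin 4`, as a matrix indexed by `Fin n → Fin 2`. -/
def nPauli {n : ℕ} (g : Fin n → Fin 4) : QMat n :=
  Matrix.of fun r c => ∏ k, pauliMat (g k) (r k) (c k)

/-- `M` is an `n`-qubit Pauli observable. -/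
def IsPauliObs (n : ℕ) (M : QMat n) : Prop := ∃ g : Fin n → Fin 4, M = nPauli g

/-- `I^⊗n`, the `n`-fold tensor product of the identity. -/
def idN (n : ℕ) : QMat n := nPauli (fun _ => ⟨0, by omega⟩)

/-- Product of `f` over a finite set of naturals, taken in increasing order
(well-defined without commutativity; agrees with the unordered product when the
factors pairwise commute). -/
def natFinsetProd {M : Type*} [Monoid M] (s : Finset ℕ) (f : ℕ → M) : M :=
  ((s.sort (· ≤ ·)).map f).prod

/-- `(V,H,G)` is a hypergram: `V` a nonempty finite vertex set, `H` a set of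
nonempty hyperedges covering `V`, `G` a set of 2-element edges on `V` forming a
simple reduced graph, no edge of `G` being contained in a hyperedge of `H`. -/
def IsHypergram (V : Finset ℕ) (H G : Finset (Finset ℕ)) : Prop :=
  V.Nonempty ∧
  (∀ h ∈ H, h ⊆ V ∧ h.Nonempty) ∧
  (∀ v ∈ V, ∃ h ∈ H, v ∈ h) ∧
  (∀ e ∈ G, e ⊆ V ∧ e.card = 2) ∧
  (∀ v ∈ V, ∃ e ∈ G, v ∈ e) ∧
  (∀ v ∈ V, ∀ w ∈ V,
    (∀ u ∈ V, (({v, u} : Finset ℕ) ∈ G ↔ ({w, u} : Finset ℕ) ∈ G)) → v = w) ∧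
  (∀ e ∈ G, ∀ h ∈ H, ¬ e ⊆ h)

/-- `α` is an `n`-qubit Pauli assignment of the hypergram `(V,H,G)`. -/
def IsPauliAssignment (V : Finset ℕ) (H G : Finset (Finset ℕ)) (n : ℕ)
    (α : ℕ → QMat n) : Prop :=
  (∀ v ∈ V, IsPauliObs n (α v)) ∧
  (∀ v ∈ V, α v ≠ idN n) ∧
  (∀ v₁ ∈ V, ∀ v₂ ∈ V, α v₁ = α v₂ → v₁ = v₂) ∧
  (∀ v₁ ∈ V, ∀ v₂ ∈ V, v₁ ≠ v₂ →
    (α v₁ * α v₂ = -(α v₂ * α v₁) ↔ ({v₁, v₂} : Finset ℕ) ∈ G)) ∧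
  (∀ h ∈ H, natFinsetProd h α = idN n ∨ natFinsetProd h α = -(idN n))

/-- The sign `sgn_α(h) ∈ {−1,1}` of a hyperedge `h`: `∏_{v∈h} α(v) = sgn_α(h)·I^⊗n`. -/
def quantumSgn {n : ℕ} (α : ℕ → QMat n) (h : Finset ℕ) : ℤ :=
  if natFinsetProd h α = idN n then 1 else -1

/-- The sign `sgn_a(h) = ∏_{v∈h} a(v)` of a hyperedge for a classical assignment. -/
def classicalSgn (a : ℕ → ℤ) (h : Finset ℕ) : ℤ := ∏ v ∈ h, a v

/-- The contextuality degree of a Pauli assignment: the minimum over classical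
assignments `a : V → {−1,1}` of the number of hyperedges whose signs differ. -/
def contextualityDegree {n : ℕ} (H : Finset (Finset ℕ)) (α : ℕ → QMat n) : ℕ :=
  sInf { d : ℕ | ∃ a : ℕ → ℤ, (∀ v, a v = 1 ∨ a v = -1) ∧
    d = (H.filter (fun h => quantumSgn α h ≠ classicalSgn a h)).card }

/-- The context (incidence) matrix of a hypergram over 𝔽₂. -/
def contextMatrix (V : Finset ℕ) (H : Finset (Finset ℕ)) :
    Matrix {h // h ∈ H} {v // v ∈ V} (ZMod 2) :=
  Matrix.of fun h v => if v.1 ∈ h.1 then 1 else 0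

/-- The anticommutation (adjacency) matrix of a hypergram over 𝔽₂. -/
def anticommMatrix (V : Finset ℕ) (G : Finset (Finset ℕ)) :
    Matrix {v // v ∈ V} {v // v ∈ V} (ZMod 2) :=
  Matrix.of fun i j => if ({i.1, j.1} : Finset ℕ) ∈ G then 1 else 0

/-- The standard symplectic form on `𝔽₂^{2n}`:
`⟨x,y⟩ = Σ_{k=1}^{n} (x_{2k−1} y_{2k} + x_{2k} y_{2k−1})`. -/
def sympForm (n : ℕ) (x y : Fin (2 * n) → ZMod 2) : ZMod 2 :=
  ∑ k : Fin n,
    (x ⟨2 * k.1, by have := k.2; omega⟩ * y ⟨2 * k.1 + 1, by have := k.2; omega⟩ +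
     x ⟨2 * k.1 + 1, by have := k.2; omega⟩ * y ⟨2 * k.1, by have := k.2; omega⟩)

/-- The single-qubit encoding `ψ(I)=(0,0), ψ(X)=(0,1), ψ(Y)=(1,1), ψ(Z)=(1,0)`. -/
def psi4 : Fin 4 → (ZMod 2) × (ZMod 2)
  | ⟨0, _⟩ => (0, 0)
  | ⟨1, _⟩ => (0, 1)
  | ⟨2, _⟩ => (1, 1)
  | ⟨3, _⟩ => (1, 0)

/-- The encoding `ψ` of an `n`-qubit Pauli observable (given by its tensor
factors `g`) as a vector of `𝔽₂^{2n}`, concatenating the per-factor encodings. -/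
def psiVec {n : ℕ} (g : Fin n → Fin 4) : Fin (2 * n) → ZMod 2 := fun idx =>
  if idx.1 % 2 = 0 then (psi4 (g ⟨idx.1 / 2, by have := idx.2; omega⟩)).1
  else (psi4 (g ⟨idx.1 / 2, by have := idx.2; omega⟩)).2

/-- All pairs of elements of `S` commute. -/
def PairComm {n : ℕ} (S : Finset (QMat n)) : Prop := ∀ a ∈ S, ∀ b ∈ S, a * b = b * a

/-- The (well-defined) product of a finite set of pairwise commuting matrices. -/
def commProd {n : ℕ} (S : Finset (QMat n)) (h : PairComm S) : QMat n :=
  S.noncommProd id (fun a ha b hb _ => h a ha b hb)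

/-- Pairwise commutation is inherited by subsets. -/
def pairCommOfSubset {n : ℕ} {S T : Finset (QMat n)} (hST : S ⊆ T) (h : PairComm T) :
    PairComm S := fun a ha b hb => h a (hST ha) b (hST hb)

/-- `Q` (pairwise commuting) is independent: no nonempty subset has product `±I^⊗n`. -/
def IsIndep {n : ℕ} (Q : Finset (QMat n)) (hQ : PairComm Q) : Prop :=
  ∀ S : Finset (QMat n), ∀ (hS : S ⊆ Q), S.Nonempty →
    commProd S (pairCommOfSubset hS hQ) ≠ idN n ∧
    commProd S (pairCommOfSubset hS hQ) ≠ -(idN n)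

/-- The vertex set `{1, …, 15}`. -/
def V15 : Finset ℕ := Finset.Icc 1 15

/-- The 15 lines of the doily. -/
def doilyLines : Finset (Finset ℕ) :=
  { {1,2,3}, {1,8,9}, {1,10,11}, {2,4,6}, {2,5,7}, {3,12,15}, {3,13,14},
    {4,8,12}, {4,10,14}, {5,8,13}, {5,10,15}, {6,9,15}, {6,11,13},
    {7,9,14}, {7,11,12} }

/-- The 10 lines of the two-spread `H_{2s}`. -/
def twoSpreadLines : Finset (Finset ℕ) :=
  { {1,2,3}, {1,10,11}, {2,4,6}, {3,13,14}, {4,8,12}, {5,8,13}, {5,10,15},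
    {6,9,15}, {7,9,14}, {7,11,12} }

/-- The anticommutation graph `G_d = G_{2s}`: pairs of distinct vertices not on a
common doily line. -/
def doilyG : Finset (Finset ℕ) :=
  (V15.powersetCard 2).filter (fun e => ∀ h ∈ doilyLines, ¬ e ⊆ h)

/-! Over `𝔽₂` the anticommutation matrix `A` is alternating. Splitting off one hyperbolic pair
at a time (symplectic Gram–Schmidt) realizes it as the Gram matrix, for the standard symplectic
form on `𝔽₂^{2N}`, of a family `ψ` that separates points; then `ψ` spans and `rank A = 2N`.
Sending `ψ v` to the Pauli string with factors encoded by `psi4` turns the symplectic form into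
the commutation sign, so the strings of `v` and `w` anticommute iff `{v, w} ∈ G`. The row of
`C * A = 0` indexed by a hyperedge `h` says that `∑_{v ∈ h} ψ v` is orthogonal to every `ψ w`,
hence zero, so the product of their strings is a scalar; as these strings pairwise commute and
square to `1`, the scalar is `±1`. -/

theorem AddChar.map_sum_eq_prod {ι A M : Type*} [AddCommMonoid A] [CommMonoid M]
    (ψ : AddChar A M) (s : Finset ι) (f : ι → A) : ψ (∑ i ∈ s, f i) = ∏ i ∈ s, ψ (f i) := by
  induction s using Finset.induction_on with
  | empty => simp
  | insert a s ha ih => rw [Finset.sum_insert ha, Finset.prod_insert ha, map_add_eq_mul, ih]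

theorem List.prod_mul_self_eq_one {M : Type*} [Monoid M] {l : List M}
    (hcomm : ∀ x ∈ l, ∀ y ∈ l, Commute x y) (hsq : ∀ x ∈ l, x * x = 1) :
    l.prod * l.prod = 1 := by
  induction l with
  | nil => simp
  | cons a l ih =>
    have hal : Commute a l.prod :=
      Commute.list_prod_right _ _ fun y hy => hcomm a (by simp) y (by simp [hy])
    rw [List.prod_cons, mul_assoc, ← mul_assoc l.prod, ← hal.eq, mul_assoc, ih, mul_one,
      hsq a (by simp)]
    · exact fun x hx y hy => hcomm x (by simp [hx]) y (by simp [hy])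
    · exact fun x hx => hsq x (by simp [hx])

section PiKronecker

variable {ι n R : Type*} [Fintype ι] [CommSemiring R]

def piKronecker (M : ι → Matrix n n R) : Matrix (ι → n) (ι → n) R :=
  Matrix.of fun r c => ∏ k, M k (r k) (c k)

theorem piKronecker_smul (a : ι → R) (M : ι → Matrix n n R) :
    piKronecker (fun k => a k • M k) = (∏ k, a k) • piKronecker M := by
  ext r c
  simp [piKronecker, Finset.prod_mul_distrib]

theorem piKronecker_one [DecidableEq n] : piKronecker (fun _ : ι => (1 : Matrix n n R)) = 1 := by
  ext r c
  simp [piKronecker, Matrix.one_apply, Finset.prod_boole, funext_iff]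

variable [DecidableEq ι] [Fintype n]

theorem piKronecker_mul (M M' : ι → Matrix n n R) :
    piKronecker M * piKronecker M' = piKronecker fun k => M k * M' k := by
  ext r c
  simp only [piKronecker, Matrix.mul_apply, Matrix.of_apply, ← Finset.prod_mul_distrib]
  exact (Fintype.prod_sum fun k j => M k (r k) j * M' k j (c k)).symm

theorem trace_piKronecker (M : ι → Matrix n n R) :
    (piKronecker M).trace = ∏ k, (M k).trace := by
  simp only [Matrix.trace, Matrix.diag, piKronecker, Matrix.of_apply]
  exact (Fintype.prod_sum fun k j => M k j j).symm

end PiKronecker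

def pauliIndex (p : ZMod 2 × ZMod 2) : Fin 4 :=
  if p = (0, 0) then 0 else if p = (0, 1) then 1 else if p = (1, 1) then 2 else 3

theorem psi4_pauliIndex (p : ZMod 2 × ZMod 2) : psi4 (pauliIndex p) = p := by
  revert p; decide

def pauliPhase : Fin 4 → Fin 4 → ℂ :=
  ![![1, 1, 1, 1], ![1, 1, Complex.I, -Complex.I], ![1, -Complex.I, 1, Complex.I],
    ![1, Complex.I, -Complex.I, 1]]

def parity : AddChar (ZMod 2) ℂ := AddChar.zmodChar 2 (ζ := -1) (by norm_num)

theorem pauliMat_mul (a b : Fin 4) :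
    pauliMat a * pauliMat b = pauliPhase a b • pauliMat (pauliIndex (psi4 a + psi4 b)) := by
  fin_cases a <;> fin_cases b <;>
    simp +decide [pauliPhase, pauliIndex, pauliMat, Matrix.one_fin_two]

theorem pauliMat_mul_self (a : Fin 4) : pauliMat a * pauliMat a = 1 := by
  fin_cases a <;> simp [pauliMat, Matrix.one_fin_two]

theorem pauliMat_mul_comm (a b : Fin 4) :
    pauliMat a * pauliMat b =
      parity ((psi4 a).1 * (psi4 b).2 - (psi4 a).2 * (psi4 b).1) • (pauliMat b * pauliMat a) := by
  fin_cases a <;> fin_cases b <;>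
    simp [parity, AddChar.zmodChar_apply, ZMod.val_one, psi4, pauliMat, Matrix.one_fin_two]

theorem trace_pauliMat_mul (a b : Fin 4) :
    (pauliMat a * pauliMat b).trace = if a = b then 2 else 0 := by
  fin_cases a <;> fin_cases b <;> norm_num [pauliMat, Matrix.one_fin_two, Matrix.trace_fin_two]

section SymplecticForm

variable (K : Type*) [CommRing K]

def symplecticForm (N : ℕ) : LinearMap.BilinForm K (Fin N → K × K) :=
  LinearMap.mk₂ K (fun x y => ∑ k, ((x k).1 * (y k).2 - (x k).2 * (y k).1))
    (fun x x' y => by simp only [← Finset.sum_add_distrib]; congr! 1; simp; ring)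
    (fun c x y => by simp only [smul_eq_mul, Finset.mul_sum]; congr! 1; simp; ring)
    (fun x y y' => by simp only [← Finset.sum_add_distrib]; congr! 1; simp; ring)
    (fun c x y => by simp only [smul_eq_mul, Finset.mul_sum]; congr! 1; simp; ring)

variable {K} {N : ℕ}

theorem symplecticForm_apply (x y : Fin N → K × K) :
    symplecticForm K N x y = ∑ k, ((x k).1 * (y k).2 - (x k).2 * (y k).1) := rfl

theorem symplecticForm_snoc (x y : Fin N → K × K) (p q : K × K) :
    symplecticForm K (N + 1) (Fin.snoc x p) (Fin.snoc y q) =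
      symplecticForm K N x y + (p.1 * q.2 - p.2 * q.1) := by
  simp only [symplecticForm_apply, Fin.sum_univ_castSucc, Fin.snoc_castSucc, Fin.snoc_last,
    Finset.sum_sub_distrib]
  ring

theorem symplecticForm_isAlt : LinearMap.IsAlt (symplecticForm K N) := fun x => by
  simp [symplecticForm_apply, mul_comm]

theorem symplecticForm_nondegenerate : (symplecticForm K N).Nondegenerate := by
  refine (symplecticForm_isAlt.isRefl.nondegenerate_iff_separatingRight).2 fun y hy => ?_
  funext k
  have h1 := hy (Pi.single k (1, 0))
  have h2 := hy (Pi.single k (0, 1))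
  simp [symplecticForm_apply, Pi.single_apply, apply_ite Prod.fst, apply_ite Prod.snd] at h1 h2
  exact Prod.ext h2 h1

variable (K N) in
theorem finrank_symplecticSpace [Nontrivial K] : Module.finrank K (Fin N → K × K) = 2 * N := by
  simp [Module.finrank_pi_fintype, Module.finrank_prod, mul_comm]

end SymplecticForm

section Gram

variable {K V ι : Type*} [Field K] [AddCommGroup V] [Module K V] [FiniteDimensional K V]
  {B : LinearMap.BilinForm K V}

theorem LinearMap.BilinForm.span_eq_top_of_separating (hB : B.Nondegenerate) {ψ : ι → V}
    (hψ : ∀ x, (∀ i, B (ψ i) x = 0) → x = 0) : Submodule.span K (Set.range ψ) = ⊤ := by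
  have hperp : B.orthogonal (Submodule.span K (Set.range ψ)) = ⊥ :=
    eq_bot_iff.2 fun x hx => hψ x fun i => hx _ (Submodule.subset_span ⟨i, rfl⟩)
  have hdim := LinearMap.BilinForm.finrank_orthogonal hB (Submodule.span K (Set.range ψ))
  rw [hperp, finrank_bot] at hdim
  exact Submodule.eq_top_of_finrank_eq
    (le_antisymm (Submodule.finrank_le _) (Nat.le_of_sub_eq_zero hdim.symm))

theorem LinearMap.BilinForm.rank_eq_finrank_of_separating [Fintype ι] (hB : B.Nondegenerate)
    {A : Matrix ι ι K} {ψ : ι → V} (hgram : ∀ i j, B (ψ i) (ψ j) = A i j)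
    (hψ : ∀ x, (∀ i, B (ψ i) x = 0) → x = 0) : A.rank = Module.finrank K V := by
  let M : V →ₗ[K] ι → K := LinearMap.pi fun i => B (ψ i)
  have hM : Function.Injective M := (injective_iff_map_eq_zero M).2 fun x hx => hψ x (congrFun hx)
  have hfactor : A.mulVecLin = M ∘ₗ Fintype.linearCombination K ψ := by
    refine LinearMap.ext fun c => funext fun i => ?_
    simp [M, Matrix.mulVec, dotProduct, Fintype.linearCombination_apply, hgram, mul_comm]
  rw [Matrix.rank, hfactor, LinearMap.range_comp_of_range_eq_top _
    (by rw [Fintype.range_linearCombination, LinearMap.BilinForm.span_eq_top_of_separating hB hψ]),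
    LinearMap.finrank_range_of_inj hM]

end Gram

section Realization

variable {K m : Type*} [Field K]

structure IsSymplecticRealization {N : ℕ} (A : Matrix m m K) (ψ : m → Fin N → K × K) : Prop where
  gram : ∀ i j, symplecticForm K N (ψ i) (ψ j) = A i j
  separating : ∀ x, (∀ i, symplecticForm K N (ψ i) x = 0) → x = 0

theorem IsSymplecticRealization.rank_eq [Fintype m] {N : ℕ} {A : Matrix m m K}
    {ψ : m → Fin N → K × K} (h : IsSymplecticRealization A ψ) : A.rank = 2 * N :=
  (LinearMap.BilinForm.rank_eq_finrank_of_separating symplecticForm_nondegenerate h.gram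
    h.separating).trans (finrank_symplecticSpace K N)

/-- `A` minus the Gram matrix of the pair `pᵢ = A i j₀`, `qᵢ = A i₀ i / A i₀ j₀`, which is
what the extra coordinate of `IsSymplecticRealization.snoc_of_reduce` contributes. -/
def symplecticReduce (A : Matrix m m K) (i₀ j₀ : m) : Matrix m m K :=
  Matrix.of fun i j => A i j - (A i j₀ * A i₀ j - A i₀ i * A j j₀) / A i₀ j₀

variable {A : Matrix m m K} {i₀ j₀ : m}

theorem symplecticReduce_skew (hskew : ∀ i j, A j i = -A i j) (i j : m) :
    symplecticReduce A i₀ j₀ j i = -symplecticReduce A i₀ j₀ i j := by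
  simp only [symplecticReduce, Matrix.of_apply, hskew i j]
  ring

theorem symplecticReduce_diag (hdiag : ∀ i, A i i = 0) (i : m) :
    symplecticReduce A i₀ j₀ i i = 0 := by
  simp only [symplecticReduce, Matrix.of_apply, hdiag]
  ring

theorem symplecticReduce_apply_right (hdiag : ∀ i, A i i = 0) (hpiv : A i₀ j₀ ≠ 0) (i : m) :
    symplecticReduce A i₀ j₀ i j₀ = 0 := by
  simp only [symplecticReduce, Matrix.of_apply, hdiag]
  field_simp
  ring

variable (hskew : ∀ i j, A j i = -A i j) (hdiag : ∀ i, A i i = 0) (hpiv : A i₀ j₀ ≠ 0)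
include hskew hdiag hpiv

theorem symplecticReduce_apply_left (i : m) : symplecticReduce A i₀ j₀ i i₀ = 0 := by
  simp only [symplecticReduce, Matrix.of_apply, hdiag, hskew i₀ i]
  field_simp
  ring

theorem card_nonzero_rows_symplecticReduce_lt [Fintype m] :
    (Finset.univ.filter fun i => symplecticReduce A i₀ j₀ i ≠ 0).card <
      (Finset.univ.filter fun i => A i ≠ 0).card := by
  refine Finset.card_lt_card ((Finset.ssubset_iff_of_subset ?_).2 ⟨i₀, ?_, ?_⟩)
  · intro i
    simp only [Finset.mem_filter, Finset.mem_univ, true_and, not_imp_not]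
    intro hi
    have hi₀ : A i₀ i = 0 := by rw [hskew i i₀, congrFun hi i₀, Pi.zero_apply, neg_zero]
    funext j
    simp [symplecticReduce, hi, hi₀]
  · simpa using fun h => hpiv (congrFun h j₀)
  · simp only [Finset.mem_filter, Finset.mem_univ, true_and, not_not]
    funext j
    rw [Pi.zero_apply, ← neg_eq_zero, ← symplecticReduce_skew hskew,
      symplecticReduce_apply_left hskew hdiag hpiv]

theorem IsSymplecticRealization.snoc_of_reduce {N : ℕ} {ψ : m → Fin N → K × K}
    (h : IsSymplecticRealization (symplecticReduce A i₀ j₀) ψ) :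
    IsSymplecticRealization A fun i => Fin.snoc (ψ i) (A i j₀, A i₀ i / A i₀ j₀) := by
  have hψ₀ : ψ i₀ = 0 := h.separating _ fun i => by
    rw [h.gram, symplecticReduce_apply_left hskew hdiag hpiv]
  have hψ₁ : ψ j₀ = 0 := h.separating _ fun i => by
    rw [h.gram, symplecticReduce_apply_right hdiag hpiv]
  refine ⟨fun i j => ?_, fun x hx => ?_⟩
  · rw [symplecticForm_snoc, h.gram]
    simp only [symplecticReduce, Matrix.of_apply]
    ring
  · rw [← Fin.snoc_init_self x] at hx
    simp only [symplecticForm_snoc] at hx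
    have ht : (x (Fin.last N)).2 = 0 := by
      simpa [hψ₀, hdiag, hpiv] using hx i₀
    have hs : (x (Fin.last N)).1 = 0 := by
      simpa [hψ₁, hdiag, hpiv, ht] using hx j₀
    have hinit : Fin.init x = 0 := h.separating _ fun i => by
      simpa [hs, ht] using hx i
    have hlast : x (Fin.last N) = 0 := Prod.ext hs ht
    rw [← Fin.snoc_init_self x, hinit, hlast]
    funext k
    refine Fin.lastCases ?_ (fun k => ?_) k <;> simp

end Realization

theorem exists_isSymplecticRealization {K m : Type*} [Field K] [Fintype m] (A : Matrix m m K)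
    (hskew : ∀ i j, A j i = -A i j) (hdiag : ∀ i, A i i = 0) :
    ∃ (N : ℕ) (ψ : m → Fin N → K × K), IsSymplecticRealization A ψ := by
  by_cases hA : A = 0
  · subst hA
    exact ⟨0, 0, ⟨fun i j => by simp [symplecticForm_apply], fun x _ => Subsingleton.elim x 0⟩⟩
  obtain ⟨i₀, j₀, hpiv⟩ : ∃ i j, A i j ≠ 0 := by
    by_contra! h
    exact hA (Matrix.ext h)
  obtain ⟨N, ψ, h⟩ := exists_isSymplecticRealization (symplecticReduce A i₀ j₀)
    (symplecticReduce_skew hskew) (symplecticReduce_diag hdiag)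
  exact ⟨N + 1, _, h.snoc_of_reduce hskew hdiag hpiv⟩
termination_by (Finset.univ.filter fun i => A i ≠ 0).card
decreasing_by exact card_nonzero_rows_symplecticReduce_lt hskew hdiag hpiv

section PauliString

variable {n : ℕ}

theorem nPauli_eq_piKronecker (g : Fin n → Fin 4) :
    nPauli g = piKronecker fun k => pauliMat (g k) := rfl

theorem idN_eq_one : idN n = 1 := by
  rw [idN, nPauli_eq_piKronecker]
  exact piKronecker_one

theorem trace_nPauli_mul (g g' : Fin n → Fin 4) :
    (nPauli g * nPauli g').trace = if g = g' then 2 ^ n else 0 := by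
  simp [nPauli_eq_piKronecker, piKronecker_mul, trace_piKronecker, trace_pauliMat_mul,
    Finset.prod_ite_zero, funext_iff]

theorem nPauli_injective : Function.Injective (nPauli (n := n)) := by
  intro g g' h
  have htr := trace_nPauli_mul g g'
  rw [← h, trace_nPauli_mul, if_pos rfl] at htr
  by_contra hne
  rw [if_neg hne] at htr
  exact pow_ne_zero n two_ne_zero htr

def pauliOfVec (x : Fin n → ZMod 2 × ZMod 2) : QMat n :=
  nPauli fun k => pauliIndex (x k)

theorem pauliOfVec_injective : Function.Injective (pauliOfVec (n := n)) := by
  intro x y h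
  funext k
  rw [← psi4_pauliIndex (x k), ← psi4_pauliIndex (y k), congrFun (nPauli_injective h) k]

theorem pauliOfVec_zero : pauliOfVec (0 : Fin n → ZMod 2 × ZMod 2) = 1 := by
  rw [← idN_eq_one, idN, pauliOfVec]
  rfl

theorem pauliOfVec_mul_self (x : Fin n → ZMod 2 × ZMod 2) : pauliOfVec x * pauliOfVec x = 1 := by
  simp only [pauliOfVec, nPauli_eq_piKronecker, piKronecker_mul, pauliMat_mul_self]
  exact piKronecker_one

theorem exists_pauliOfVec_mul (x y : Fin n → ZMod 2 × ZMod 2) :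
    ∃ c : ℂ, pauliOfVec x * pauliOfVec y = c • pauliOfVec (x + y) := by
  refine ⟨∏ k, pauliPhase (pauliIndex (x k)) (pauliIndex (y k)), ?_⟩
  simp only [pauliOfVec, nPauli_eq_piKronecker, piKronecker_mul, pauliMat_mul, psi4_pauliIndex,
    piKronecker_smul, Pi.add_apply]

theorem pauliOfVec_mul_comm (x y : Fin n → ZMod 2 × ZMod 2) :
    pauliOfVec x * pauliOfVec y =
      parity (symplecticForm (ZMod 2) n x y) • (pauliOfVec y * pauliOfVec x) := by
  simp only [pauliOfVec, nPauli_eq_piKronecker, piKronecker_mul]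
  rw [funext fun k => pauliMat_mul_comm (pauliIndex (x k)) (pauliIndex (y k)), piKronecker_smul]
  simp only [psi4_pauliIndex, symplecticForm_apply, AddChar.map_sum_eq_prod]

theorem pauliOfVec_commute {x y : Fin n → ZMod 2 × ZMod 2}
    (h : symplecticForm (ZMod 2) n x y = 0) : Commute (pauliOfVec x) (pauliOfVec y) := by
  have hxy := pauliOfVec_mul_comm x y
  rwa [h, AddChar.map_zero_eq_one, one_smul] at hxy

theorem pauliOfVec_mul_ne_neg_self (x y : Fin n → ZMod 2 × ZMod 2) :
    pauliOfVec x * pauliOfVec y ≠ -(pauliOfVec x * pauliOfVec y) := by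
  intro hneg
  have h : pauliOfVec x * pauliOfVec y = 0 := by
    ext i j
    exact CharZero.eq_neg_self_iff.1 (congrFun (congrFun hneg i) j)
  have h1 : pauliOfVec x * pauliOfVec y * (pauliOfVec y * pauliOfVec x) = 1 := by
    rw [mul_assoc, ← mul_assoc (pauliOfVec y), pauliOfVec_mul_self, one_mul, pauliOfVec_mul_self]
  rw [h, zero_mul] at h1
  exact zero_ne_one h1

theorem pauliOfVec_anticomm_iff (x y : Fin n → ZMod 2 × ZMod 2) :
    pauliOfVec x * pauliOfVec y = -(pauliOfVec y * pauliOfVec x) ↔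
      symplecticForm (ZMod 2) n x y = 1 := by
  rw [pauliOfVec_mul_comm]
  rcases (by decide : ∀ s : ZMod 2, s = 0 ∨ s = 1) (symplecticForm (ZMod 2) n x y) with h | h
  · simp only [h, AddChar.map_zero_eq_one, one_smul, zero_ne_one, iff_false]
    exact pauliOfVec_mul_ne_neg_self y x
  · simp [h, parity, AddChar.zmodChar_apply, ZMod.val_one]

theorem exists_list_prod_pauliOfVec (l : List (Fin n → ZMod 2 × ZMod 2)) :
    ∃ c : ℂ, (l.map pauliOfVec).prod = c • pauliOfVec l.sum := by
  induction l with
  | nil => exact ⟨1, by simp [pauliOfVec_zero]⟩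
  | cons x l ih =>
    obtain ⟨c, hc⟩ := ih
    obtain ⟨d, hd⟩ := exists_pauliOfVec_mul x l.sum
    exact ⟨c * d, by rw [List.map_cons, List.prod_cons, List.sum_cons, hc, mul_smul_comm, hd,
      smul_smul, mul_comm]⟩

theorem list_prod_pauliOfVec_eq_one_or_neg (l : List (Fin n → ZMod 2 × ZMod 2))
    (hcomm : ∀ x ∈ l, ∀ y ∈ l, symplecticForm (ZMod 2) n x y = 0) (hsum : l.sum = 0) :
    (l.map pauliOfVec).prod = 1 ∨ (l.map pauliOfVec).prod = -1 := by
  obtain ⟨c, hc⟩ := exists_list_prod_pauliOfVec l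
  rw [hsum, pauliOfVec_zero] at hc
  have hsq := List.prod_mul_self_eq_one (l := l.map pauliOfVec) (by
    simp only [List.mem_map]
    rintro _ ⟨x, hx, rfl⟩ _ ⟨y, hy, rfl⟩
    exact pauliOfVec_commute (hcomm x hx y hy)) (by
    simp only [List.mem_map]
    rintro _ ⟨x, -, rfl⟩
    exact pauliOfVec_mul_self x)
  rw [hc, smul_mul_smul_comm, one_mul] at hsq
  have hc2 : c * c = 1 := by simpa using congrFun (congrFun hsq 0) 0
  rcases mul_self_eq_one_iff.1 hc2 with rfl | rfl <;> simp [hc]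

end PauliString

section Hypergram

variable {V : Finset ℕ} {H G : Finset (Finset ℕ)}

theorem anticommMatrix_symm (i j : {v // v ∈ V}) :
    anticommMatrix V G j i = anticommMatrix V G i j := by
  simp [anticommMatrix, Finset.pair_comm]

theorem IsHypergram.anticommMatrix_diag (hgram : IsHypergram V H G) (i : {v // v ∈ V}) :
    anticommMatrix V G i i = 0 := by
  have ⟨_, _, _, hedge, _⟩ := hgram
  rw [anticommMatrix, Matrix.of_apply, if_neg fun hi => by simpa using (hedge _ hi).2]

theorem IsHypergram.exists_adj (hgram : IsHypergram V H G) {v : ℕ} (hv : v ∈ V) :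
    ∃ u ∈ V, ({v, u} : Finset ℕ) ∈ G := by
  obtain ⟨-, -, -, hedge, hcover, -⟩ := hgram
  obtain ⟨e, he, hve⟩ := hcover v hv
  obtain ⟨hsub, hcard⟩ := hedge e he
  obtain ⟨a, b, -, rfl⟩ := Finset.card_eq_two.1 hcard
  rcases Finset.mem_insert.1 hve with rfl | hvb
  · exact ⟨b, hsub (by simp), he⟩
  · rw [Finset.mem_singleton.1 hvb]
    exact ⟨a, hsub (by simp), by rwa [Finset.pair_comm]⟩

theorem IsHypergram.subset_of_mem (hgram : IsHypergram V H G) {h : Finset ℕ} (hh : h ∈ H) :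
    h ⊆ V := by
  have ⟨_, hhyper, _⟩ := hgram
  exact (hhyper h hh).1

theorem IsHypergram.pair_not_mem_of_mem_hyperedge (hgram : IsHypergram V H G) {h : Finset ℕ}
    (hh : h ∈ H) {v w : ℕ} (hv : v ∈ h) (hw : w ∈ h) : ({v, w} : Finset ℕ) ∉ G := by
  have ⟨_, _, _, _, _, _, hnoedge⟩ := hgram
  exact fun hG => hnoedge _ hG h hh (Finset.insert_subset hv (Finset.singleton_subset_iff.2 hw))

theorem IsHypergram.isPauliAssignment_pauliOfVec (hgram : IsHypergram V H G) {N : ℕ}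
    (ψ : ℕ → Fin N → ZMod 2 × ZMod 2)
    (hform : ∀ v ∈ V, ∀ w ∈ V,
      symplecticForm (ZMod 2) N (ψ v) (ψ w) = if ({v, w} : Finset ℕ) ∈ G then 1 else 0)
    (hcontext : ∀ h ∈ H, ∑ v ∈ h, ψ v = 0) :
    IsPauliAssignment V H G N fun v => pauliOfVec (ψ v) := by
  have ⟨_, _, _, _, _, hreduced, _⟩ := hgram
  refine ⟨fun v _ => ⟨_, rfl⟩, fun v hv hid => ?_, fun v hv w hw heq => ?_,
    fun v hv w hw _ => ?_, fun h hh => ?_⟩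
  · obtain ⟨u, hu, hvu⟩ := hgram.exists_adj hv
    rw [idN_eq_one, ← pauliOfVec_zero] at hid
    simpa [pauliOfVec_injective hid, hvu, symplecticForm_apply] using hform v hv u hu
  · refine hreduced v hv w hw fun u hu => ?_
    have hvw := hform v hv u hu
    rw [pauliOfVec_injective heq, hform w hw u hu] at hvw
    split_ifs at hvw <;> simp_all
  · rw [pauliOfVec_anticomm_iff, hform v hv w hw]
    split_ifs <;> simp_all
  · rw [natFinsetProd, idN_eq_one, show (fun v => pauliOfVec (ψ v)) = pauliOfVec ∘ ψ from rfl,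
      ← List.map_map]
    refine list_prod_pauliOfVec_eq_one_or_neg _ ?_ ?_
    · simp only [List.mem_map, Finset.mem_sort]
      rintro _ ⟨v, hv, rfl⟩ _ ⟨w, hw, rfl⟩
      rw [hform v (hgram.subset_of_mem hh hv) w (hgram.subset_of_mem hh hw),
        if_neg (hgram.pair_not_mem_of_mem_hyperedge hh hv hw)]
    · rw [← hcontext h hh, Finset.sum_eq_multiset_sum, ← Finset.sort_eq h (· ≤ ·),
        Multiset.map_coe, Multiset.sum_coe]

theorem IsSymplecticRealization.sum_hyperedge_eq_zero {N : ℕ}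
    {ψ : {v // v ∈ V} → Fin N → ZMod 2 × ZMod 2}
    (hψ : IsSymplecticRealization (anticommMatrix V G) ψ)
    (hzero : contextMatrix V H * anticommMatrix V G = 0) {h : Finset ℕ} (hh : h ∈ H)
    (hsub : h ⊆ V) : ∑ v ∈ h, Function.extend Subtype.val ψ 0 v = 0 := by
  set ψ' : ℕ → Fin N → ZMod 2 × ZMod 2 := Function.extend Subtype.val ψ 0
  refine hψ.separating _ fun j => ?_
  calc symplecticForm (ZMod 2) N (ψ j) (∑ v ∈ h, ψ' v)
      = ∑ v ∈ V, if v ∈ h then symplecticForm (ZMod 2) N (ψ j) (ψ' v) else 0 := by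
        rw [map_sum, Finset.sum_ite_mem, Finset.inter_eq_right.2 hsub]
    _ = (contextMatrix V H * anticommMatrix V G) ⟨h, hh⟩ j := by
        rw [← Finset.sum_coe_sort V, Matrix.mul_apply]
        refine Finset.sum_congr rfl fun i _ => ?_
        simp [ψ', contextMatrix, hψ.gram, anticommMatrix_symm]
    _ = 0 := by rw [hzero]; rfl

end Hypergram

/-- If the context matrix times the anticommutation matrix of a
hypergram is zero over 𝔽₂, then the rank `r` of the anticommutation matrix is
even and there exists an `(r/2)`-qubit Pauli assignment of the hypergram. -/
theorem matrix_condition_implies_assignable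
    (V : Finset ℕ) (H G : Finset (Finset ℕ)) (hgram : IsHypergram V H G)
    (hzero : contextMatrix V H * anticommMatrix V G = 0) :
    Even (anticommMatrix V G).rank ∧
    ∃ α : ℕ → QMat ((anticommMatrix V G).rank / 2),
      IsPauliAssignment V H G ((anticommMatrix V G).rank / 2) α := by
  obtain ⟨N, ψ, hψ⟩ := exists_isSymplecticRealization (anticommMatrix V G)
    (fun i j => by rw [anticommMatrix_symm, ZMod.neg_eq_self_mod_two]) hgram.anticommMatrix_diag
  rw [hψ.rank_eq, Nat.mul_div_cancel_left N two_pos]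
  refine ⟨even_two_mul N, _, hgram.isPauliAssignment_pauliOfVec (Function.extend Subtype.val ψ 0)
    (fun v hv w hw => ?_) fun h hh => hψ.sum_hyperedge_eq_zero hzero hh (hgram.subset_of_mem hh)⟩
  rw [Subtype.val_injective.extend_apply ψ 0 ⟨v, hv⟩,
    Subtype.val_injective.extend_apply ψ 0 ⟨w, hw⟩]
  exact hψ.gram _ _

end
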